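/- arXiv:1710.01795 — 2 statements merged into one kernel-verified Lean document; each statement's English description precedes it below -/
import Mathlib

section
/- Let W be a separable Banach space of type 2 and (Y_k) ⊆ L²(Ω; W) i.i.d. and centered, with partial sums S_n = Σ_{k=1}^{n} Y_k. Then for every ε > 0 and ε′ > 0 there exists δ ∈ (0,1) such that for all n, P( max_{⌈n(1−δ)⌉ ≤ m ≤ ⌊n(1+δ)⌋} ‖S_m − S_n‖_W > ε√n ) ≤ ε′. -/
open MeasureTheory ProbabilityTheory Finset

/-! The window `[a, b] = [⌈n(1-δ)⌉, ⌊n(1+δ)⌋]` contains `n`, so every `‖S m - S n‖` with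
`m ∈ [a, b]` is at most twice `max_{j ≤ b - a} ‖S (a + j) - S a‖`, and it suffices to bound this
maximum. That is a maximal inequality of Ottaviani type: at the first time `k` a partial sum exceeds
`3t`, either the final sum exceeds `t` or the increment after `k` exceeds `2t`, and the latter is
independent of the event of first passage at `k`. Chebyshev's inequality and the type 2 inequality
bound both probabilities by a multiple of `N E‖Y₁‖² / t²`, and the window has length `N ≤ 2δn`. -/

theorem sum_Icc_one_add_sub_sum_Icc_one {M : Type*} [AddCommGroup M] (f : ℕ → M) (a j : ℕ) :
    ∑ k ∈ Icc 1 (a + j), f k - ∑ k ∈ Icc 1 a, f k = ∑ i ∈ range j, f (a + 1 + i) := by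
  rw [← Ico_add_one_right_eq_Icc, ← Ico_add_one_right_eq_Icc,
    ← sum_Ico_consecutive f (by omega : 1 ≤ a + 1) (by omega : a + 1 ≤ a + j + 1),
    add_sub_cancel_left, sum_Ico_eq_sum_range, add_right_comm, Nat.add_sub_cancel_left]

theorem natCast_floor_sub_ceil_le {x y : ℝ} (hy : 0 ≤ y) (hxy : x ≤ y) :
    ((⌊y⌋₊ - ⌈x⌉₊ : ℕ) : ℝ) ≤ y - x := by
  rcases le_total ⌈x⌉₊ ⌊y⌋₊ with h | h
  · rw [Nat.cast_sub h]
    linarith [Nat.floor_le hy, Nat.le_ceil x]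
  · simpa [Nat.sub_eq_zero_of_le h] using hxy

theorem exists_firstPassage_of_norm_lt {E : Type*} [SeminormedAddCommGroup E] {x : ℕ → E}
    {t : ℝ} {j N : ℕ} (hjN : j ≤ N) (hj : 3 * t < ‖x j‖) (hN : ‖x N‖ < t) :
    ∃ k ≤ N, (3 * t < ‖x k‖ ∧ ∀ i < k, ‖x i‖ ≤ 3 * t) ∧ 2 * t ≤ ‖x N - x k‖ := by
  classical
  have hex : ∃ k, 3 * t < ‖x k‖ := ⟨j, hj⟩
  refine ⟨Nat.find hex, (Nat.find_min' hex hj).trans hjN,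
    ⟨Nat.find_spec hex, fun i hi => not_lt.mp (Nat.find_min hex hi)⟩, ?_⟩
  linarith [Nat.find_spec hex, norm_sub_norm_le (x (Nat.find hex)) (x N),
    norm_sub_rev (x N) (x (Nat.find hex))]

theorem exists_norm_sub_gt_half_of_mem_window {E : Type*} [SeminormedAddCommGroup E]
    {x : ℕ → E} {a b m n : ℕ} {r : ℝ} (ham : a ≤ m) (hmb : m ≤ b) (han : a ≤ n) (hnb : n ≤ b)
    (h : r < ‖x m - x n‖) : ∃ j ≤ b - a, r / 2 < ‖x (a + j) - x a‖ := by
  have htri := norm_sub_le_norm_sub_add_norm_sub (x m) (x a) (x n)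
  rw [norm_sub_rev (x a)] at htri
  by_contra! hle
  have hm := hle (m - a) (Nat.sub_le_sub_right hmb a)
  have hn := hle (n - a) (Nat.sub_le_sub_right hnb a)
  rw [Nat.add_sub_cancel' ham] at hm
  rw [Nat.add_sub_cancel' han] at hn
  linarith

theorem measurable_sum_iSup_comap {Ω M ι : Type*} [AddCommMonoid M] [MeasurableSpace M]
    [MeasurableAdd₂ M] (Z : ι → Ω → M) {s : Set ι} {F : Finset ι} (hF : ↑F ⊆ s) :
    Measurable[⨆ i ∈ s, MeasurableSpace.comap (Z i) ‹_›] fun ω => ∑ i ∈ F, Z i ω :=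
  Finset.measurable_sum F fun i hi => (comap_measurable (Z i)).mono
    (le_iSup₂ (f := fun i _ => MeasurableSpace.comap (Z i) _) i (hF hi)) le_rfl

theorem measurableSet_firstPassage {Ω W : Type*} [NormedAddCommGroup W] [MeasurableSpace W]
    [BorelSpace W] [SecondCountableTopology W] (Z : ℕ → Ω → W) (k : ℕ) (r : ℝ) :
    MeasurableSet[⨆ i ∈ Set.Iio k, MeasurableSpace.comap (Z i) ‹_›]
      {ω | r < ‖∑ i ∈ range k, Z i ω‖ ∧ ∀ j < k, ‖∑ i ∈ range j, Z i ω‖ ≤ r} := by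
  have hT : ∀ j ≤ k, Measurable[⨆ i ∈ Set.Iio k, MeasurableSpace.comap (Z i) ‹_›]
      fun ω => ∑ i ∈ range j, Z i ω := fun j hj =>
    measurable_sum_iSup_comap Z fun i hi => (mem_range.mp hi).trans_le hj
  have hset : {ω | r < ‖∑ i ∈ range k, Z i ω‖ ∧ ∀ j < k, ‖∑ i ∈ range j, Z i ω‖ ≤ r} =
      (fun ω => ∑ i ∈ range k, Z i ω) ⁻¹' {x | r < ‖x‖} ∩
        ⋂ j ∈ Set.Iio k, (fun ω => ∑ i ∈ range j, Z i ω) ⁻¹' {x | ‖x‖ ≤ r} := by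
    ext; simp
  rw [hset]
  exact (hT k le_rfl (measurableSet_lt measurable_const measurable_norm)).inter
    (MeasurableSet.biInter (Set.to_countable _) fun j hj =>
      hT j (le_of_lt hj) (measurableSet_le measurable_norm measurable_const))

def Type2Inequality {Ω : Type*} [MeasurableSpace Ω] (P : Measure Ω) (W : Type*)
    [NormedAddCommGroup W] [NormedSpace ℝ W] [MeasurableSpace W] (C : ℝ) : Prop :=
  ∀ (n : ℕ) (X : Fin n → Ω → W), (∀ i, MemLp (X i) 2 P) → (∀ i, ∫ ω, X i ω ∂P = 0) →
    iIndepFun X P → ∫ ω, ‖∑ i, X i ω‖ ^ 2 ∂P ≤ C * ∑ i, ∫ ω, ‖X i ω‖ ^ 2 ∂P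

section Probability

variable {Ω : Type*} [MeasurableSpace Ω] {P : Measure Ω} {W : Type*} [NormedAddCommGroup W]

theorem measure_le_norm_le_ofReal_integral_sq_div [IsFiniteMeasure P] {X : Ω → W}
    (hX : MemLp X 2 P) {s : ℝ} (hs : 0 < s) :
    P {ω | s ≤ ‖X ω‖} ≤ ENNReal.ofReal ((∫ ω, ‖X ω‖ ^ 2 ∂P) / s ^ 2) := by
  have h := mul_meas_ge_le_integral_of_nonneg (ae_of_all _ fun ω => sq_nonneg ‖X ω‖)
    hX.norm.integrable_sq (s ^ 2)
  have hset : {ω | s ≤ ‖X ω‖} = {ω | s ^ 2 ≤ ‖X ω‖ ^ 2} := by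
    ext ω; simp [pow_le_pow_iff_left₀ hs.le (norm_nonneg _)]
  rw [hset, ← ENNReal.ofReal_toReal (measure_ne_top P _)]
  exact ENNReal.ofReal_le_ofReal ((le_div_iff₀' (by positivity)).2 h)

variable [MeasurableSpace W]

theorem Type2Inequality.integral_norm_sum_sq_le [NormedSpace ℝ W] {C : ℝ}
    (h : Type2Inequality P W C) {ι : Type*} {X : ι → Ω → W} (s : Finset ι)
    (hL2 : ∀ i ∈ s, MemLp (X i) 2 P) (hcent : ∀ i ∈ s, ∫ ω, X i ω ∂P = 0)
    (hindep : iIndepFun X P) :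
    ∫ ω, ‖∑ i ∈ s, X i ω‖ ^ 2 ∂P ≤ C * ∑ i ∈ s, ∫ ω, ‖X i ω‖ ^ 2 ∂P := by
  have hsum (ω : Ω) : ∑ j, X (s.equivFin.symm j) ω = ∑ i ∈ s, X i ω := by
    rw [s.equivFin.symm.sum_comp (fun i : s => X i ω)]
    exact s.sum_coe_sort (fun i => X i ω)
  have hmom : ∑ j, ∫ ω, ‖X (s.equivFin.symm j) ω‖ ^ 2 ∂P = ∑ i ∈ s, ∫ ω, ‖X i ω‖ ^ 2 ∂P := by
    rw [s.equivFin.symm.sum_comp (fun i : s => ∫ ω, ‖X i ω‖ ^ 2 ∂P)]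
    exact s.sum_coe_sort (fun i => ∫ ω, ‖X i ω‖ ^ 2 ∂P)
  have h := h _ (fun j => X (s.equivFin.symm j)) (fun j => hL2 _ (s.equivFin.symm j).2)
    (fun j => hcent _ (s.equivFin.symm j).2)
    (hindep.precomp (Subtype.val_injective.comp s.equivFin.symm.injective))
  simpa only [hsum, hmom] using h

variable [BorelSpace W] [SecondCountableTopology W]

theorem measure_exists_norm_sum_range_gt_le_add [IsProbabilityMeasure P] {Z : ℕ → Ω → W}
    (hZ : ∀ i, Measurable (Z i)) (hindep : iIndepFun Z P) (t : ℝ) (N : ℕ) {c : ENNReal}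
    (hc : ∀ k ≤ N, P {ω | 2 * t ≤ ‖∑ i ∈ Ico k N, Z i ω‖} ≤ c) :
    P {ω | ∃ j ≤ N, 3 * t < ‖∑ i ∈ range j, Z i ω‖} ≤
      P {ω | t ≤ ‖∑ i ∈ range N, Z i ω‖} + c := by
  set A : ℕ → Set Ω := fun k =>
    {ω | 3 * t < ‖∑ i ∈ range k, Z i ω‖ ∧ ∀ j < k, ‖∑ i ∈ range j, Z i ω‖ ≤ 3 * t}
  set D : ℕ → Set Ω := fun k => {ω | 2 * t ≤ ‖∑ i ∈ Ico k N, Z i ω‖}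
  have hsub : {ω | ∃ j ≤ N, 3 * t < ‖∑ i ∈ range j, Z i ω‖} ⊆
      {ω | t ≤ ‖∑ i ∈ range N, Z i ω‖} ∪ ⋃ k ∈ range (N + 1), A k ∩ D k := by
    rintro ω ⟨j, hjN, hj⟩
    by_cases hN : t ≤ ‖∑ i ∈ range N, Z i ω‖
    · exact Or.inl hN
    obtain ⟨k, hkN, hA, hD⟩ := exists_firstPassage_of_norm_lt
      (x := fun j => ∑ i ∈ range j, Z i ω) hjN hj (not_le.mp hN)
    refine Or.inr (Set.mem_biUnion (mem_range.mpr (Nat.lt_succ_of_le hkN)) ⟨hA, ?_⟩)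
    rwa [← sum_range_add_sum_Ico _ hkN, add_sub_cancel_left] at hD
  have hindepAD : ∀ k, P (A k ∩ D k) = P (A k) * P (D k) := by
    intro k
    have hmeas := fun i => (hZ i).comap_le
    refine (Indep_iff _ _ P).mp (indep_iSup_of_disjoint hmeas
      ((iIndepFun_iff_iIndep _ _ _).mp hindep) (Set.Iio_disjoint_Ici le_rfl)) _ _
      (measurableSet_firstPassage Z k _) ?_
    exact measurable_sum_iSup_comap Z (fun i hi => (mem_Ico.mp hi).1)
      (measurableSet_le measurable_const measurable_norm)
  have hAdisj : (↑(range (N + 1)) : Set ℕ).PairwiseDisjoint A := by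
    intro k _ l _ hkl
    refine Set.disjoint_left.mpr fun ω hk hl => ?_
    rcases lt_or_gt_of_ne hkl with h | h
    · exact (hl.2 k h).not_gt hk.1
    · exact (hk.2 l h).not_gt hl.1
  have hAmeas : ∀ k, MeasurableSet (A k) := fun k =>
    iSup₂_le (fun i _ => (hZ i).comap_le) _ (measurableSet_firstPassage Z k _)
  calc P {ω | ∃ j ≤ N, 3 * t < ‖∑ i ∈ range j, Z i ω‖}
      ≤ P {ω | t ≤ ‖∑ i ∈ range N, Z i ω‖} + ∑ k ∈ range (N + 1), P (A k ∩ D k) :=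
        (measure_mono hsub).trans ((measure_union_le _ _).trans
          (by gcongr; exact measure_biUnion_finset_le _ _))
    _ ≤ P {ω | t ≤ ‖∑ i ∈ range N, Z i ω‖} + ∑ k ∈ range (N + 1), P (A k) * c := by
        gcongr with k hk
        rw [hindepAD]
        gcongr
        exact hc k (Nat.lt_succ_iff.mp (mem_range.mp hk))
    _ ≤ P {ω | t ≤ ‖∑ i ∈ range N, Z i ω‖} + c := by
        rw [← sum_mul, ← measure_biUnion_finset hAdisj fun k _ => hAmeas k]
        gcongr
        exact mul_le_of_le_one_left' prob_le_one

theorem measure_exists_norm_sum_range_gt_le_of_integral_sq_le [IsProbabilityMeasure P]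
    {Z : ℕ → Ω → W} (hZ : ∀ i, Measurable (Z i)) (hindep : iIndepFun Z P)
    (hL2 : ∀ i, MemLp (Z i) 2 P) {N : ℕ} {M : ℝ}
    (hM : ∀ k ≤ N, ∫ ω, ‖∑ i ∈ Ico k N, Z i ω‖ ^ 2 ∂P ≤ M) {t : ℝ} (ht : 0 < t) :
    P {ω | ∃ j ≤ N, t < ‖∑ i ∈ range j, Z i ω‖} ≤ ENNReal.ofReal (12 * M / t ^ 2) := by
  have hM0 : 0 ≤ M := (integral_nonneg fun ω => sq_nonneg _).trans (hM 0 (Nat.zero_le N))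
  have htail : ∀ k ≤ N, ∀ s > 0, P {ω | s ≤ ‖∑ i ∈ Ico k N, Z i ω‖} ≤ ENNReal.ofReal (M / s ^ 2) :=
    fun k hk s hs => (measure_le_norm_le_ofReal_integral_sq_div
      (memLp_finsetSum (f := Z) _ fun i _ => hL2 i) hs).trans
      (ENNReal.ofReal_le_ofReal (by gcongr; exact hM k hk))
  have h := measure_exists_norm_sum_range_gt_le_add hZ hindep (t / 3) N
    (fun k hk => htail k hk (2 * (t / 3)) (by positivity))
  rw [mul_div_cancel₀ t three_ne_zero, range_eq_Ico] at h
  refine h.trans ((add_le_add (htail 0 (Nat.zero_le N) _ (by positivity)) le_rfl).trans ?_)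
  rw [← ENNReal.ofReal_add (by positivity) (by positivity)]
  refine ENNReal.ofReal_le_ofReal ((show _ = 45 / 4 * M / t ^ 2 by field_simp; ring).trans_le ?_)
  gcongr
  norm_num

theorem Type2Inequality.measure_exists_norm_sum_range_gt_le [IsProbabilityMeasure P]
    [NormedSpace ℝ W] {C : ℝ} (hT2 : Type2Inequality P W C) (hC : 0 ≤ C) {Z : ℕ → Ω → W}
    (hZ : ∀ i, Measurable (Z i)) (hindep : iIndepFun Z P) (hL2 : ∀ i, MemLp (Z i) 2 P)
    (hcent : ∀ i, ∫ ω, Z i ω ∂P = 0) {σ2 : ℝ} (hmom : ∀ i, ∫ ω, ‖Z i ω‖ ^ 2 ∂P ≤ σ2)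
    (N : ℕ) {t : ℝ} (ht : 0 < t) :
    P {ω | ∃ j ≤ N, t < ‖∑ i ∈ range j, Z i ω‖} ≤ ENNReal.ofReal (12 * (C * N * σ2) / t ^ 2) := by
  have hσ2 : 0 ≤ σ2 := (integral_nonneg fun ω => sq_nonneg _).trans (hmom 0)
  refine measure_exists_norm_sum_range_gt_le_of_integral_sq_le hZ hindep hL2 (fun k _ => ?_) ht
  calc ∫ ω, ‖∑ i ∈ Ico k N, Z i ω‖ ^ 2 ∂P
      ≤ C * ∑ i ∈ Ico k N, ∫ ω, ‖Z i ω‖ ^ 2 ∂P :=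
        hT2.integral_norm_sum_sq_le _ (fun i _ => hL2 i) (fun i _ => hcent i) hindep
    _ ≤ C * ((N - k : ℕ) * σ2) := by
        gcongr
        simpa using sum_le_sum fun i (_ : i ∈ Ico k N) => hmom i
    _ ≤ C * N * σ2 := by
        rw [mul_assoc]
        gcongr
        exact_mod_cast Nat.sub_le N k

theorem Type2Inequality.measure_exists_norm_partialSum_sub_gt_le [IsProbabilityMeasure P]
    [NormedSpace ℝ W] {C : ℝ} (hT2 : Type2Inequality P W C) (hC : 0 ≤ C) {Y : ℕ → Ω → W}
    (hY : ∀ k, Measurable (Y k)) (hindep : iIndepFun Y P) (hL2 : ∀ k, MemLp (Y k) 2 P)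
    (hcent : ∀ k, ∫ ω, Y k ω ∂P = 0) {σ2 : ℝ} (hmom : ∀ k, ∫ ω, ‖Y k ω‖ ^ 2 ∂P ≤ σ2)
    {S : ℕ → Ω → W} (hS : ∀ n ω, S n ω = ∑ k ∈ Icc 1 n, Y k ω) (a N : ℕ) {t : ℝ} (ht : 0 < t) :
    P {ω | ∃ j ≤ N, t < ‖S (a + j) ω - S a ω‖} ≤ ENNReal.ofReal (12 * (C * N * σ2) / t ^ 2) := by
  simp only [hS, sum_Icc_one_add_sub_sum_Icc_one]
  exact hT2.measure_exists_norm_sum_range_gt_le hC (fun i => hY _)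
    (hindep.precomp (add_right_injective (a + 1))) (fun i => hL2 _) (fun i => hcent _)
    (fun i => hmom _) N ht

end Probability

theorem fluctuation_estimate_type2_general
    {Ω : Type*} [MeasurableSpace Ω] (P : Measure Ω) [IsProbabilityMeasure P]
    (W : Type*) [NormedAddCommGroup W] [NormedSpace ℝ W]
    [SecondCountableTopology W] [MeasurableSpace W] [BorelSpace W]
    -- W is of type 2:
    (htype2 : ∃ C > (0:ℝ), ∀ (n : ℕ) (X : Fin n → Ω → W),
      (∀ i, MemLp (X i) 2 P) → (∀ i, ∫ ω, X i ω ∂P = 0) →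
      iIndepFun X P →
      ∫ ω, ‖∑ i, X i ω‖ ^ 2 ∂P ≤ C * ∑ i, ∫ ω, ‖X i ω‖ ^ 2 ∂P)
    (Y : ℕ → Ω → W) (hYmeas : ∀ k, Measurable (Y k))
    (hindep : iIndepFun Y P)
    (hident : ∀ k, IdentDistrib (Y k) (Y 1) P P)
    (hL2 : ∀ k, MemLp (Y k) 2 P)
    (hcent : ∫ ω, Y 1 ω ∂P = 0)
    (S : ℕ → Ω → W) (hS : ∀ n ω, S n ω = ∑ k ∈ Finset.Icc 1 n, Y k ω) :
    ∀ ε > (0:ℝ), ∀ ε' > (0:ℝ), ∃ δ : ℝ, 0 < δ ∧ δ < 1 ∧ ∀ n : ℕ,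
      P {ω | ∃ m : ℕ, ⌈(n : ℝ) * (1 - δ)⌉₊ ≤ m ∧ m ≤ ⌊(n : ℝ) * (1 + δ)⌋₊ ∧
          ε * Real.sqrt n < ‖S m ω - S n ω‖}
        ≤ ENNReal.ofReal ε' := by
  obtain ⟨C, hC, hT2 : Type2Inequality P W C⟩ := htype2
  set σ2 := ∫ ω, ‖Y 1 ω‖ ^ 2 ∂P
  have hσ2 : 0 ≤ σ2 := integral_nonneg fun ω => sq_nonneg _
  have hmom : ∀ k, ∫ ω, ‖Y k ω‖ ^ 2 ∂P ≤ σ2 := fun k =>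
    ((hident k).comp (measurable_norm.pow_const 2)).integral_eq.le
  have hcent' : ∀ k, ∫ ω, Y k ω ∂P = 0 := fun k => (hident k).integral_eq.trans hcent
  intro ε hε ε' hε'
  -- the maximal inequality below bounds the probability by
  -- `12 C (2δn) σ2 / (ε √n / 2)² = 96 C σ2 δ / ε²`
  set δ := min (1 / 2) (ε ^ 2 * ε' / (96 * C * (σ2 + 1)))
  have hδ : 0 < δ := lt_min (by norm_num) (by positivity)
  refine ⟨δ, hδ, (min_le_left _ _).trans_lt (by norm_num), fun n => ?_⟩
  rcases n.eq_zero_or_pos with rfl | hn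
  · simp
  set a := ⌈(n : ℝ) * (1 - δ)⌉₊
  set b := ⌊(n : ℝ) * (1 + δ)⌋₊
  have han : a ≤ n := Nat.ceil_le.mpr (by nlinarith)
  have hnb : n ≤ b := Nat.le_floor (by nlinarith)
  have hwindow : ((b - a : ℕ) : ℝ) ≤ 2 * δ * n :=
    (natCast_floor_sub_ceil_le (by positivity) (by nlinarith)).trans_eq (by ring)
  have hδ' : δ * (96 * C * (σ2 + 1)) ≤ ε ^ 2 * ε' :=
    (le_div_iff₀ (by positivity)).mp (min_le_right _ _)
  calc P {ω | ∃ m, a ≤ m ∧ m ≤ b ∧ ε * √n < ‖S m ω - S n ω‖}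
      ≤ P {ω | ∃ j ≤ b - a, ε * √n / 2 < ‖S (a + j) ω - S a ω‖} :=
        measure_mono fun ω ⟨_, ham, hmb, hm⟩ =>
          exists_norm_sub_gt_half_of_mem_window (x := fun m => S m ω) ham hmb han hnb hm
    _ ≤ ENNReal.ofReal (12 * (C * (b - a : ℕ) * σ2) / (ε * √n / 2) ^ 2) :=
        hT2.measure_exists_norm_partialSum_sub_gt_le hC.le hYmeas hindep hL2 hcent' hmom hS
          a (b - a) (by positivity)
    _ ≤ ENNReal.ofReal ε' := by
        refine ENNReal.ofReal_le_ofReal ?_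
        rw [div_pow, mul_pow, Real.sq_sqrt n.cast_nonneg, div_le_iff₀ (by positivity)]
        calc 12 * (C * (b - a : ℕ) * σ2) ≤ n / 4 * (δ * (96 * C * (σ2 + 1))) := by
              nlinarith [mul_le_mul_of_nonneg_left hwindow hC.le]
          _ ≤ ε' * (ε ^ 2 * n / 2 ^ 2) := by nlinarith

theorem fluctuation_estimate_type2
    {Ω : Type*} [MeasurableSpace Ω] (P : Measure Ω) [IsProbabilityMeasure P]
    (W : Type*) [NormedAddCommGroup W] [NormedSpace ℝ W] [CompleteSpace W]
    [SecondCountableTopology W] [MeasurableSpace W] [BorelSpace W]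
    -- W is of type 2:
    (htype2 : ∃ C > (0:ℝ), ∀ (n : ℕ) (X : Fin n → Ω → W),
      (∀ i, MemLp (X i) 2 P) → (∀ i, ∫ ω, X i ω ∂P = 0) →
      iIndepFun X P →
      ∫ ω, ‖∑ i, X i ω‖ ^ 2 ∂P ≤ C * ∑ i, ∫ ω, ‖X i ω‖ ^ 2 ∂P)
    (Y : ℕ → Ω → W) (hYmeas : ∀ k, Measurable (Y k))
    (hindep : iIndepFun Y P)
    (hident : ∀ k, IdentDistrib (Y k) (Y 1) P P)
    (hL2 : ∀ k, MemLp (Y k) 2 P)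
    (hcent : ∫ ω, Y 1 ω ∂P = 0)
    (S : ℕ → Ω → W) (hS : ∀ n ω, S n ω = ∑ k ∈ Finset.Icc 1 n, Y k ω) :
    ∀ ε > (0:ℝ), ∀ ε' > (0:ℝ), ∃ δ : ℝ, 0 < δ ∧ δ < 1 ∧ ∀ n : ℕ,
      P {ω | ∃ m : ℕ, ⌈(n : ℝ) * (1 - δ)⌉₊ ≤ m ∧ m ≤ ⌊(n : ℝ) * (1 + δ)⌋₊ ∧
          ε * Real.sqrt n < ‖S m ω - S n ω‖}
        ≤ ENNReal.ofReal ε' :=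
  fluctuation_estimate_type2_general P W htype2 Y hYmeas hindep hident hL2 hcent S hS
end

section
/- Let (ξ_k)_{k≥1} be an i.i.d. real sequence with E ξ₁ = ν < 0 and ξ₁ ∈ L^{11+ε}(Ω) for some ε > 0, and suppose N : Ω → ℕ ∪ {∞} is a random variable satisfying P(N = m) ≤ P(Σ_{k=1}^{m−1} ξ_k > 0) for all m ≥ 2. Then Σ_{m=1}^{∞} m⁴ · P(N = m)^{1/2} < ∞. -/
open MeasureTheory ProbabilityTheory Filter
open scoped ENNReal NNReal

section Helpers

lemma exp_le_quadratic {y : ℝ} (hy : y ≤ 1) : Real.exp y ≤ 1 + y + y ^ 2 := by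
  rcases le_or_gt (-1) y with h | h
  · have hb := Real.exp_bound (x := y) (by rw [abs_le]; exact ⟨h, hy⟩) (n := 2) (by norm_num)
    have h2 : |Real.exp y - ∑ i ∈ Finset.range 2, y ^ i / i.factorial| ≤ |y| ^ 2 * (3 / 4) := by
      convert hb using 2 <;> norm_num
    rw [abs_le] at h2
    have h3 : (∑ i ∈ Finset.range 2, y ^ i / i.factorial) = 1 + y := by
      simp [Finset.sum_range_succ]
    have h4 : |y| ^ 2 = y ^ 2 := sq_abs y
    nlinarith [h2.2, sq_nonneg y]
  · have h1 : Real.exp y < 1 := by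
      rw [← Real.exp_zero]; exact Real.exp_lt_exp.mpr (by linarith)
    nlinarith [sq_nonneg y]

lemma abs_min_le {a M : ℝ} (hM : 0 ≤ M) : |min a M| ≤ |a| + M := by
  rw [abs_le]
  constructor
  · rcases le_total a M with h | h
    · rw [min_eq_left h]; linarith [neg_abs_le a]
    · rw [min_eq_right h]; linarith [abs_nonneg a]
  · calc min a M ≤ M := min_le_right a M
      _ ≤ |a| + M := by linarith [abs_nonneg a]

lemma sq_min_le {a M : ℝ} (hM : 0 ≤ M) : (min a M) ^ 2 ≤ a ^ 2 := by
  rcases le_total a M with h | h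
  · rw [min_eq_left h]
  · rw [min_eq_right h]
    have h0 : 0 ≤ a := hM.trans h
    nlinarith

lemma rpow_half_add_le {a b : ℝ} (ha : 0 ≤ a) (hb : 0 ≤ b) :
    (a + b) ^ ((1:ℝ)/2) ≤ a ^ ((1:ℝ)/2) + b ^ ((1:ℝ)/2) := by
  rw [← Real.sqrt_eq_rpow, ← Real.sqrt_eq_rpow, ← Real.sqrt_eq_rpow]
  have h : a + b ≤ (Real.sqrt a + Real.sqrt b) ^ 2 := by
    have := Real.sq_sqrt ha
    have := Real.sq_sqrt hb
    nlinarith [Real.sqrt_nonneg a, Real.sqrt_nonneg b,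
      mul_nonneg (Real.sqrt_nonneg a) (Real.sqrt_nonneg b)]
  calc Real.sqrt (a + b) ≤ Real.sqrt ((Real.sqrt a + Real.sqrt b) ^ 2) := Real.sqrt_le_sqrt h
    _ = Real.sqrt a + Real.sqrt b := Real.sqrt_sq (by positivity)

lemma iIndepFun_ae_eq {Ω : Type*} [MeasurableSpace Ω] {P : Measure Ω}
    {f g : ℕ → Ω → ℝ} (h : iIndepFun f P)
    (hfg : ∀ k, f k =ᵐ[P] g k) :
    iIndepFun g P := by
  rw [iIndepFun_iff_measure_inter_preimage_eq_mul] at h ⊢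
  intro S sets hsets
  have hpre : ∀ k : ℕ, f k ⁻¹' sets k =ᵐ[P] g k ⁻¹' sets k := fun k => by
    filter_upwards [hfg k] with ω hω
    show (f k ω ∈ sets k) = (g k ω ∈ sets k)
    rw [hω]
  have hinter : (⋂ i ∈ S, f i ⁻¹' sets i) =ᵐ[P] (⋂ i ∈ S, g i ⁻¹' sets i) := by
    exact _root_.EventuallyEq.countable_bInter (S := (S : Set ℕ))
      (Set.Finite.countable S.finite_toSet) (fun i _ => hpre i)
  rw [← measure_congr hinter, h S hsets]
  exact Finset.prod_congr rfl fun i _ => measure_congr (hpre i)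

lemma summable_pow_mul_exp_neg_rpow {c β : ℝ} (hc : 0 < c) (hβ : 0 < β) :
    Summable (fun m : ℕ => (m : ℝ) ^ (4 : ℕ) * Real.exp (-(c * (m : ℝ) ^ β))) := by
  set k : ℕ := ⌈6 / β⌉₊ with hkdef
  have hkβ : 6 ≤ (k : ℝ) * β := by
    have h := Nat.le_ceil (6 / β)
    calc (6 : ℝ) = 6 / β * β := by field_simp
      _ ≤ (k : ℝ) * β := by gcongr
  set C : ℝ := k.factorial / c ^ k with hCdef
  have hC : 0 ≤ C := by positivity
  apply Summable.of_nonneg_of_le (f := fun m : ℕ => C * (m : ℝ) ^ (-2 : ℝ))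
  · intro m; positivity
  · intro m
    rcases Nat.eq_zero_or_pos m with rfl | hm
    · simp [Real.zero_rpow (by norm_num : (-2 : ℝ) ≠ 0)]
    · have hm1 : (1 : ℝ) ≤ (m : ℝ) := by exact_mod_cast hm
      have hm0 : (0 : ℝ) < (m : ℝ) := by linarith
      set x : ℝ := c * (m : ℝ) ^ β with hxdef
      have hx : 0 < x := by positivity
      have h1 : x ^ k / k.factorial ≤ Real.exp x := Real.pow_div_factorial_le_exp x hx.le k
      have hxk : (0 : ℝ) < x ^ k / k.factorial := by positivity
      have h2 : Real.exp (-x) ≤ k.factorial / x ^ k := by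
        rw [Real.exp_neg]
        calc (Real.exp x)⁻¹ ≤ (x ^ k / k.factorial)⁻¹ := by
              exact inv_anti₀ hxk h1
          _ = k.factorial / x ^ k := by rw [inv_div]
      have h3 : x ^ k = c ^ k * (m : ℝ) ^ (β * (k : ℝ)) := by
        rw [hxdef, mul_pow, ← Real.rpow_natCast ((m : ℝ) ^ β) k, ← Real.rpow_mul hm0.le]
      have h4 : (m : ℝ) ^ (6 : ℝ) ≤ (m : ℝ) ^ (β * (k : ℝ)) := by
        apply Real.rpow_le_rpow_of_exponent_le hm1
        linarith [hkβ, mul_comm (k : ℝ) β]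
      have h5 : (k.factorial : ℝ) / x ^ k ≤ C / (m : ℝ) ^ (6 : ℝ) := by
        rw [h3, hCdef]
        rw [div_le_div_iff₀ (by positivity) (by positivity)]
        calc (k.factorial : ℝ) * (m : ℝ) ^ (6 : ℝ)
            ≤ (k.factorial : ℝ) * (m : ℝ) ^ (β * (k : ℝ)) := by gcongr
          _ = (k.factorial : ℝ) / c ^ k * (c ^ k * (m : ℝ) ^ (β * (k : ℝ))) := by
              field_simp
      calc (m : ℝ) ^ (4 : ℕ) * Real.exp (-x)
          ≤ (m : ℝ) ^ (4 : ℕ) * (C / (m : ℝ) ^ (6 : ℝ)) := by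
            apply mul_le_mul_of_nonneg_left (h2.trans h5) (by positivity)
        _ = C * (m : ℝ) ^ (-2 : ℝ) := by
            rw [← Real.rpow_natCast (m : ℝ) 4, div_eq_mul_inv, ← Real.rpow_neg hm0.le,
              mul_comm C, ← mul_assoc, ← Real.rpow_add hm0]
            norm_num [mul_comm]
  · exact (Real.summable_nat_rpow.mpr (by norm_num)).mul_left C

/-- Chernoff bound for a sum of truncated independent variables. -/
lemma chernoff_trunc {Ω : Type*} [MeasurableSpace Ω] (P : Measure Ω) [IsProbabilityMeasure P]
    (ξ : ℕ → Ω → ℝ) (hmeas : ∀ k, Measurable (ξ k))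
    (hindep : iIndepFun ξ P)
    (ν σ₂ : ℝ)
    (hint : ∀ k, Integrable (ξ k) P) (hmean : ∀ k, ∫ ω, ξ k ω ∂P ≤ ν)
    (hsq : ∀ k, Integrable (fun ω => (ξ k ω) ^ 2) P)
    (hsqval : ∀ k, ∫ ω, (ξ k ω) ^ 2 ∂P ≤ σ₂)
    (M lam : ℝ) (hM : 0 ≤ M) (hlam0 : 0 < lam) (hlamM : lam * M ≤ 1)
    (hlamσ : lam * σ₂ ≤ -ν / 2) (s : Finset ℕ) :
    (P {ω | 0 ≤ ∑ k ∈ s, min (ξ k ω) M}).toReal ≤ Real.exp (s.card * (lam * ν / 2)) := by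
  set Y : ℕ → Ω → ℝ := fun k ω => min (ξ k ω) M with hYdef
  have hYmeas : ∀ k, Measurable (Y k) := fun k => (hmeas k).min measurable_const
  have hYindep : iIndepFun Y P :=
    hindep.comp (fun _ x => min x M) (fun _ => measurable_id.min measurable_const)
  have hYle : ∀ k ω, Y k ω ≤ M := fun k ω => min_le_right _ _
  have hYint : ∀ k, Integrable (Y k) P := by
    intro k
    refine Integrable.mono' ((hint k).abs.add (integrable_const M))
      (hYmeas k).aestronglyMeasurable ?_
    filter_upwards with ω
    simpa [Real.norm_eq_abs] using abs_min_le (a := ξ k ω) hM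
  have hYsq : ∀ k, Integrable (fun ω => (Y k ω) ^ 2) P := by
    intro k
    refine Integrable.mono' (hsq k) ((hYmeas k).pow_const 2).aestronglyMeasurable ?_
    filter_upwards with ω
    rw [Real.norm_eq_abs, abs_of_nonneg (sq_nonneg _)]
    exact sq_min_le hM
  have hYexp : ∀ k, Integrable (fun ω => Real.exp (lam * Y k ω)) P := by
    intro k
    refine Integrable.mono' (integrable_const (Real.exp (lam * M)))
      ((hYmeas k).const_mul lam).exp.aestronglyMeasurable ?_
    filter_upwards with ω
    rw [Real.norm_eq_abs, abs_of_nonneg (Real.exp_pos _).le]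
    exact Real.exp_le_exp.mpr (mul_le_mul_of_nonneg_left (hYle k ω) hlam0.le)
  have hmgf : ∀ k, mgf (Y k) P lam ≤ Real.exp (lam * ν / 2) := by
    intro k
    have hpt : ∀ ω, Real.exp (lam * Y k ω) ≤ 1 + lam * Y k ω + (lam * Y k ω) ^ 2 := by
      intro ω
      apply exp_le_quadratic
      calc lam * Y k ω ≤ lam * M := mul_le_mul_of_nonneg_left (hYle k ω) hlam0.le
        _ ≤ 1 := hlamM
    have e1 : Integrable (fun ω => lam * Y k ω) P := (hYint k).const_mul lam
    have e2 : Integrable (fun ω => lam ^ 2 * (Y k ω) ^ 2) P := (hYsq k).const_mul _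
    have e12 : Integrable (fun ω => 1 + lam * Y k ω) P := (integrable_const 1).add e1
    have hint1 : Integrable (fun ω => 1 + lam * Y k ω + (lam * Y k ω) ^ 2) P := by
      have : (fun ω => 1 + lam * Y k ω + (lam * Y k ω) ^ 2)
          = fun ω => (1 + lam * Y k ω) + lam ^ 2 * (Y k ω) ^ 2 := by
        funext ω; ring
      rw [this]; exact e12.add e2
    have h1 : mgf (Y k) P lam ≤ ∫ ω, (1 + lam * Y k ω + (lam * Y k ω) ^ 2) ∂P :=
      integral_mono (hYexp k) hint1 fun ω => hpt ω
    have h2 : ∫ ω, (1 + lam * Y k ω + (lam * Y k ω) ^ 2) ∂P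
        = 1 + lam * ∫ ω, Y k ω ∂P + lam ^ 2 * ∫ ω, (Y k ω) ^ 2 ∂P := by
      simp_rw [mul_pow]
      rw [integral_add e12 e2, integral_add (integrable_const 1) e1, integral_const_mul,
        integral_const_mul]
      simp
    have hYmean : ∫ ω, Y k ω ∂P ≤ ν :=
      le_trans (integral_mono (hYint k) (hint k) fun ω => min_le_left _ _) (hmean k)
    have hYsqval : ∫ ω, (Y k ω) ^ 2 ∂P ≤ σ₂ :=
      le_trans (integral_mono (hYsq k) (hsq k) fun ω => sq_min_le hM) (hsqval k)
    have h3 : 1 + lam * ∫ ω, Y k ω ∂P + lam ^ 2 * ∫ ω, (Y k ω) ^ 2 ∂P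
        ≤ 1 + lam * ν + lam ^ 2 * σ₂ := by
      have := mul_le_mul_of_nonneg_left hYmean hlam0.le
      have := mul_le_mul_of_nonneg_left hYsqval (sq_nonneg lam)
      linarith
    have h4 : 1 + lam * ν + lam ^ 2 * σ₂ ≤ Real.exp (lam * ν + lam ^ 2 * σ₂) := by
      linarith [Real.add_one_le_exp (lam * ν + lam ^ 2 * σ₂)]
    have h5 : lam * ν + lam ^ 2 * σ₂ ≤ lam * ν / 2 := by
      have h6 : lam * (lam * σ₂) ≤ lam * (-ν / 2) := mul_le_mul_of_nonneg_left hlamσ hlam0.le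
      nlinarith
    calc mgf (Y k) P lam ≤ 1 + lam * ν + lam ^ 2 * σ₂ := by
          rw [mgf]; exact (h1.trans (le_of_eq h2)).trans h3
      _ ≤ Real.exp (lam * ν + lam ^ 2 * σ₂) := h4
      _ ≤ Real.exp (lam * ν / 2) := Real.exp_le_exp.mpr h5
  have hsumexp : Integrable (fun ω => Real.exp (lam * (∑ k ∈ s, Y k) ω)) P := by
    refine Integrable.mono' (integrable_const (Real.exp (lam * (s.card * M)))) ?_ ?_
    · have hsm : Measurable (∑ k ∈ s, Y k) := by
        have hfe : (∑ k ∈ s, Y k) = fun ω => ∑ k ∈ s, Y k ω := by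
          ext ω; simp [Finset.sum_apply]
        rw [hfe]
        exact Finset.measurable_sum s fun k _ => hYmeas k
      exact (hsm.const_mul lam).exp.aestronglyMeasurable
    · filter_upwards with ω
      rw [Real.norm_eq_abs, abs_of_nonneg (Real.exp_pos _).le]
      apply Real.exp_le_exp.mpr
      apply mul_le_mul_of_nonneg_left _ hlam0.le
      rw [Finset.sum_apply]
      calc ∑ k ∈ s, Y k ω ≤ ∑ k ∈ s, M := Finset.sum_le_sum fun k _ => hYle k ω
        _ = s.card * M := by rw [Finset.sum_const, nsmul_eq_mul]
  have hchern := measure_ge_le_exp_mul_mgf (μ := P) (X := ∑ k ∈ s, Y k) 0 hlam0.le hsumexp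
  have hset : {ω | (0:ℝ) ≤ (∑ k ∈ s, Y k) ω} = {ω | 0 ≤ ∑ k ∈ s, min (ξ k ω) M} := by
    ext ω; simp [Finset.sum_apply, Y]
  rw [hset] at hchern
  calc (P {ω | 0 ≤ ∑ k ∈ s, min (ξ k ω) M}).toReal
      ≤ Real.exp (-lam * 0) * mgf (∑ k ∈ s, Y k) P lam := hchern
    _ = mgf (∑ k ∈ s, Y k) P lam := by simp
    _ = ∏ k ∈ s, mgf (Y k) P lam := hYindep.mgf_sum hYmeas s
    _ ≤ ∏ k ∈ s, Real.exp (lam * ν / 2) :=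
        Finset.prod_le_prod (fun k _ => mgf_nonneg) (fun k _ => hmgf k)
    _ = Real.exp (s.card * (lam * ν / 2)) := by
        rw [Finset.prod_const, ← Real.exp_nat_mul]

end Helpers

set_option maxHeartbeats 1000000 in
theorem weighted_series_extinction_time_summable
    {Ω : Type*} [MeasurableSpace Ω] (P : Measure Ω) [IsProbabilityMeasure P]
    (ξ : ℕ → Ω → ℝ) (ν ε : ℝ) (hε : 0 < ε)
    (hindep : iIndepFun ξ P)
    (hident : ∀ k, IdentDistrib (ξ k) (ξ 1) P P)
    (hLp : ∀ k, MemLp (ξ k) (ENNReal.ofReal (11 + ε)) P)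
    (hmean : ∫ ω, ξ 1 ω ∂P = ν) (hν : ν < 0)
    (N : Ω → ℕ∞)
    (hN : ∀ m : ℕ, 2 ≤ m →
      P {ω | N ω = (m : ℕ∞)} ≤ P {ω | 0 < ∑ k ∈ Finset.Icc 1 (m - 1), ξ k ω}) :
    Summable (fun m : ℕ =>
      (m : ℝ) ^ 4 * (P {ω | N ω = (m : ℕ∞)}).toReal ^ ((1 : ℝ) / 2)) := by
  classical
  -- measurable modifications
  set ξ' : ℕ → Ω → ℝ := fun k => (hLp k).1.mk (ξ k) with hξ'def
  have hmeas' : ∀ k, Measurable (ξ' k) := fun k => (hLp k).1.stronglyMeasurable_mk.measurable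
  have hae : ∀ k, ξ k =ᵐ[P] ξ' k := fun k => (hLp k).1.ae_eq_mk
  have hindep' : iIndepFun ξ' P := iIndepFun_ae_eq hindep hae
  have hident' : ∀ k, IdentDistrib (ξ' k) (ξ' 1) P P := by
    intro k
    refine ⟨(hmeas' k).aemeasurable, (hmeas' 1).aemeasurable, ?_⟩
    rw [← Measure.map_congr (hae k), ← Measure.map_congr (hae 1)]
    exact (hident k).map_eq
  -- exponents
  set ε' : ℝ := min ε 1 with hε'def
  have hε'0 : 0 < ε' := lt_min hε one_pos
  have hε'1 : ε' ≤ 1 := min_le_right _ _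
  set q : ℝ := 11 + ε' with hqdef
  have hq0 : (0:ℝ) < q := by simp only [hqdef]; linarith
  have hq2 : (2:ℝ) ≤ q := by simp only [hqdef]; linarith
  have hLq : ∀ k, MemLp (ξ' k) (ENNReal.ofReal q) P := by
    intro k
    refine MemLp.mono_exponent (MemLp.ae_eq (hae k) (hLp k)) ?_
    apply ENNReal.ofReal_le_ofReal
    simp only [hqdef]
    have : ε' ≤ ε := min_le_left _ _
    linarith
  have hint' : ∀ k, Integrable (ξ' k) P := by
    intro k
    refine MemLp.integrable ?_ (hLq k)
    rw [← ENNReal.ofReal_one]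
    exact ENNReal.ofReal_le_ofReal (by linarith)
  have hL2 : ∀ k, MemLp (ξ' k) 2 P := by
    intro k
    refine MemLp.mono_exponent (hLq k) ?_
    rw [show (2 : ℝ≥0∞) = ENNReal.ofReal 2 by norm_num]
    exact ENNReal.ofReal_le_ofReal hq2
  have hsq' : ∀ k, Integrable (fun ω => (ξ' k ω) ^ 2) P := fun k => (hL2 k).integrable_sq
  -- moments
  have hmean' : ∀ k, ∫ ω, ξ' k ω ∂P = ν := by
    intro k
    rw [(hident' k).integral_eq, ← integral_congr_ae (hae 1), hmean]
  set σ₂ : ℝ := ∫ ω, (ξ' 1 ω) ^ 2 ∂P with hσ₂def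
  have hσ₂0 : 0 ≤ σ₂ := integral_nonneg fun ω => sq_nonneg _
  have hsqval' : ∀ k, ∫ ω, (ξ' k ω) ^ 2 ∂P = σ₂ := by
    intro k
    exact ((hident' k).comp (measurable_id.pow_const 2)).integral_eq
  set A : ℝ := ∫ ω, |ξ' 1 ω| ^ q ∂P with hAdef
  have hAint : Integrable (fun ω => |ξ' 1 ω| ^ q) P := by
    have h := (hLq 1).integrable_norm_rpow (by simp [hq0]) (by simp)
    rw [ENNReal.toReal_ofReal hq0.le] at h
    simpa [Real.norm_eq_abs] using h
  have hA0 : 0 ≤ A := integral_nonneg fun ω => Real.rpow_nonneg (abs_nonneg _) q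
  -- tail bound
  have htail : ∀ M : ℝ, 0 < M → (P {ω | M ≤ ξ' 1 ω}).toReal ≤ A / M ^ q := by
    intro M hM
    have hsub : {ω | M ≤ ξ' 1 ω} ⊆ {ω | M ^ q ≤ |ξ' 1 ω| ^ q} := by
      intro ω h
      simp only [Set.mem_setOf_eq] at h ⊢
      exact Real.rpow_le_rpow hM.le (h.trans (le_abs_self _)) hq0.le
    have hmono : (P {ω | M ≤ ξ' 1 ω}).toReal ≤ (P {ω | M ^ q ≤ |ξ' 1 ω| ^ q}).toReal :=
      ENNReal.toReal_mono (measure_ne_top P _) (measure_mono hsub)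
    have hmar := mul_meas_ge_le_integral_of_nonneg (μ := P)
      (ae_of_all _ fun ω => Real.rpow_nonneg (abs_nonneg (ξ' 1 ω)) q) hAint (M ^ q)
    rw [le_div_iff₀ (by positivity)]
    calc (P {ω | M ≤ ξ' 1 ω}).toReal * M ^ q
        ≤ (P {ω | M ^ q ≤ |ξ' 1 ω| ^ q}).toReal * M ^ q := by
          apply mul_le_mul_of_nonneg_right hmono (by positivity)
      _ = M ^ q * (P {ω | M ^ q ≤ |ξ' 1 ω| ^ q}).toReal := by ring
      _ ≤ A := hmar
  have htailk : ∀ (k : ℕ) (M : ℝ), P {ω | M ≤ ξ' k ω} = P {ω | M ≤ ξ' 1 ω} := by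
    intro k M
    have h := (hident' k).measure_mem_eq (measurableSet_Ici (a := M))
    simpa [Set.preimage, Set.mem_Ici] using h
  -- constants
  set α : ℝ := (11 + ε' / 2) / q with hαdef
  have hα0 : 0 < α := by positivity
  have hα1 : α < 1 := by
    rw [hαdef, div_lt_one hq0, hqdef]; linarith
  have hαq : α * q = 11 + ε' / 2 := by
    rw [hαdef]; field_simp
  set β : ℝ := 1 - α with hβdef
  have hβ0 : 0 < β := by simp only [hβdef]; linarith
  have hβ1 : β ≤ 1 := by simp only [hβdef]; linarith
  set c₀ : ℝ := -ν / (2 * (σ₂ + 1)) with hc₀def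
  have hc₀ : 0 < c₀ := by
    apply div_pos (by linarith) (by linarith)
  set c₁ : ℝ := min 1 c₀ * (-ν) / 2 with hc₁def
  have hc₁ : 0 < c₁ := by
    apply div_pos (mul_pos (lt_min one_pos hc₀) (by linarith)) two_pos
  -- the key estimate for each n ≥ 1
  have key : ∀ n : ℕ, 1 ≤ n → (P {ω | 0 < ∑ k ∈ Finset.Icc 1 n, ξ k ω}).toReal ≤
      A * (n : ℝ) ^ (-(10 + ε' / 2) : ℝ) + Real.exp (-(c₁ * (n : ℝ) ^ β)) := by
    intro n hn
    have hn1 : (1 : ℝ) ≤ (n : ℝ) := by exact_mod_cast hn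
    have hn0 : (0 : ℝ) < (n : ℝ) := by linarith
    set M : ℝ := (n : ℝ) ^ α with hMdef
    have hM0 : (0 : ℝ) < M := by positivity
    have hM1 : (1 : ℝ) ≤ M := Real.one_le_rpow hn1 hα0.le
    set lam : ℝ := min M⁻¹ c₀ with hlamdef
    have hlam0 : 0 < lam := lt_min (by positivity) hc₀
    have hlamM : lam * M ≤ 1 := by
      calc lam * M ≤ M⁻¹ * M := by
            apply mul_le_mul_of_nonneg_right (min_le_left _ _) hM0.le
        _ = 1 := inv_mul_cancel₀ hM0.ne'
    have hlamσ : lam * σ₂ ≤ -ν / 2 := by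
      calc lam * σ₂ ≤ c₀ * σ₂ := mul_le_mul_of_nonneg_right (min_le_right _ _) hσ₂0
        _ ≤ -ν / 2 := by
            rw [hc₀def, div_mul_eq_mul_div, div_le_div_iff₀ (by linarith) two_pos]
            nlinarith
    -- replace ξ by ξ'
    have hcong : P {ω | 0 < ∑ k ∈ Finset.Icc 1 n, ξ k ω}
        = P {ω | 0 < ∑ k ∈ Finset.Icc 1 n, ξ' k ω} := by
      apply measure_congr
      have hball : ∀ᵐ ω ∂P, ∀ k ∈ Finset.Icc 1 n, ξ k ω = ξ' k ω := by
        rw [Filter.eventually_all_finset]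
        exact fun k _ => hae k
      filter_upwards [hball] with ω hω
      show (0 < ∑ k ∈ Finset.Icc 1 n, ξ k ω) = (0 < ∑ k ∈ Finset.Icc 1 n, ξ' k ω)
      rw [Finset.sum_congr rfl hω]
    -- inclusion
    have hsub : {ω | 0 < ∑ k ∈ Finset.Icc 1 n, ξ' k ω} ⊆
        (⋃ k ∈ Finset.Icc 1 n, {ω | M ≤ ξ' k ω}) ∪
          {ω | 0 ≤ ∑ k ∈ Finset.Icc 1 n, min (ξ' k ω) M} := by
      intro ω hω
      simp only [Set.mem_setOf_eq] at hω
      by_cases hcase : ∃ k ∈ Finset.Icc 1 n, M ≤ ξ' k ω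
      · obtain ⟨k, hk, hkM⟩ := hcase
        exact Or.inl (Set.mem_biUnion hk hkM)
      · push_neg at hcase
        refine Or.inr ?_
        have heq : ∀ k ∈ Finset.Icc 1 n, min (ξ' k ω) M = ξ' k ω :=
          fun k hk => min_eq_left (hcase k hk).le
        simp only [Set.mem_setOf_eq]
        rw [Finset.sum_congr rfl heq]
        exact hω.le
    -- measure bound in ℝ≥0∞
    have hbound : P {ω | 0 < ∑ k ∈ Finset.Icc 1 n, ξ' k ω} ≤
        (n : ℝ≥0∞) * P {ω | M ≤ ξ' 1 ω}
          + P {ω | 0 ≤ ∑ k ∈ Finset.Icc 1 n, min (ξ' k ω) M} := by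
      refine le_trans (measure_mono hsub) ?_
      refine le_trans (measure_union_le _ _) ?_
      gcongr
      refine le_trans (measure_biUnion_finset_le _ _) ?_
      have : ∀ k ∈ Finset.Icc 1 n, P {ω | M ≤ ξ' k ω} = P {ω | M ≤ ξ' 1 ω} :=
        fun k _ => htailk k M
      rw [Finset.sum_congr rfl this, Finset.sum_const]
      have hcard : (Finset.Icc 1 n).card = n := by rw [Nat.card_Icc]; omega
      rw [hcard]
      simp [nsmul_eq_mul]
    -- apply Chernoff
    have hchern := chernoff_trunc P ξ' hmeas' hindep' ν σ₂ hint'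
      (fun k => le_of_eq (hmean' k)) hsq' (fun k => le_of_eq (hsqval' k))
      M lam hM0.le hlam0 hlamM hlamσ (Finset.Icc 1 n)
    have hcard : (Finset.Icc 1 n).card = n := by rw [Nat.card_Icc]; omega
    rw [hcard] at hchern
    -- combine in ℝ
    have hfin : (n : ℝ≥0∞) * P {ω | M ≤ ξ' 1 ω}
        + P {ω | 0 ≤ ∑ k ∈ Finset.Icc 1 n, min (ξ' k ω) M} ≠ ⊤ := by
      apply ENNReal.add_ne_top.mpr
      constructor
      · exact ENNReal.mul_ne_top (ENNReal.natCast_ne_top n) (measure_ne_top P _)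
      · exact measure_ne_top P _
    have htoReal : (P {ω | 0 < ∑ k ∈ Finset.Icc 1 n, ξ k ω}).toReal ≤
        (n : ℝ) * (P {ω | M ≤ ξ' 1 ω}).toReal
          + (P {ω | 0 ≤ ∑ k ∈ Finset.Icc 1 n, min (ξ' k ω) M}).toReal := by
      rw [hcong]
      refine le_trans (ENNReal.toReal_mono hfin hbound) ?_
      rw [ENNReal.toReal_add (ENNReal.mul_ne_top (ENNReal.natCast_ne_top n) (measure_ne_top P _))
        (measure_ne_top P _), ENNReal.toReal_mul]
      simp
    -- estimate the two terms
    have hterm1 : (n : ℝ) * (P {ω | M ≤ ξ' 1 ω}).toReal ≤ A * (n : ℝ) ^ (-(10 + ε' / 2) : ℝ) := by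
      calc (n : ℝ) * (P {ω | M ≤ ξ' 1 ω}).toReal ≤ (n : ℝ) * (A / M ^ q) := by
            apply mul_le_mul_of_nonneg_left (htail M hM0) hn0.le
        _ = A * ((n : ℝ) * (M ^ q)⁻¹) := by ring
        _ = A * (n : ℝ) ^ (-(10 + ε' / 2) : ℝ) := by
            congr 1
            have hMq : M ^ q = (n : ℝ) ^ (α * q) := by
              rw [hMdef, ← Real.rpow_mul hn0.le]
            have hexp : (-(10 + ε' / 2) : ℝ) = 1 + -(α * q) := by rw [hαq]; ring
            rw [hMq, ← Real.rpow_neg hn0.le, hexp, Real.rpow_add hn0, Real.rpow_one]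
    have hkey : min 1 c₀ * (n : ℝ) ^ β ≤ (n : ℝ) * lam := by
      have hnβ : (n : ℝ) ^ β ≤ (n : ℝ) := by
        calc (n : ℝ) ^ β ≤ (n : ℝ) ^ (1:ℝ) := Real.rpow_le_rpow_of_exponent_le hn1 hβ1
          _ = (n : ℝ) := Real.rpow_one _
      have hnβ0 : (0:ℝ) ≤ (n : ℝ) ^ β := by positivity
      have hMinv : (n : ℝ) * M⁻¹ = (n : ℝ) ^ β := by
        have h1 : (n : ℝ) ^ β = (n : ℝ) ^ (1:ℝ) * (n : ℝ) ^ (-α) := by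
          rw [← Real.rpow_add hn0, hβdef]; ring_nf
        rw [hMdef, ← Real.rpow_neg hn0.le, h1, Real.rpow_one]
      rcases le_total M⁻¹ c₀ with hmin | hmin
      · have hlameq : lam = M⁻¹ := min_eq_left hmin
        rw [hlameq, hMinv]
        apply mul_le_of_le_one_left hnβ0 (min_le_left _ _)
      · have hlameq : lam = c₀ := min_eq_right hmin
        rw [hlameq]
        calc min 1 c₀ * (n : ℝ) ^ β ≤ c₀ * (n : ℝ) ^ β := by
              apply mul_le_mul_of_nonneg_right (min_le_right _ _) hnβ0
          _ ≤ c₀ * (n : ℝ) := by apply mul_le_mul_of_nonneg_left hnβ hc₀.le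
          _ = (n : ℝ) * c₀ := mul_comm _ _
    have hterm2 : Real.exp ((n : ℝ) * (lam * ν / 2)) ≤ Real.exp (-(c₁ * (n : ℝ) ^ β)) := by
      apply Real.exp_le_exp.mpr
      have hc₁eq : -(c₁ * (n : ℝ) ^ β) = (min 1 c₀ * (n : ℝ) ^ β) * (ν / 2) := by
        rw [hc₁def]; ring
      rw [hc₁eq]
      have : (n : ℝ) * (lam * ν / 2) = ((n : ℝ) * lam) * (ν / 2) := by ring
      rw [this]
      apply mul_le_mul_of_nonpos_right hkey (by linarith)
    calc (P {ω | 0 < ∑ k ∈ Finset.Icc 1 n, ξ k ω}).toReal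
        ≤ (n : ℝ) * (P {ω | M ≤ ξ' 1 ω}).toReal
          + (P {ω | 0 ≤ ∑ k ∈ Finset.Icc 1 n, min (ξ' k ω) M}).toReal := htoReal
      _ ≤ A * (n : ℝ) ^ (-(10 + ε' / 2) : ℝ) + Real.exp ((n : ℝ) * (lam * ν / 2)) := by
          exact add_le_add hterm1 hchern
      _ ≤ A * (n : ℝ) ^ (-(10 + ε' / 2) : ℝ) + Real.exp (-(c₁ * (n : ℝ) ^ β)) := by
          exact add_le_add_right hterm2 _
  -- per-m bound
  have keym : ∀ m : ℕ, 2 ≤ m → (P {ω | N ω = (m : ℕ∞)}).toReal ≤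
      (A * 2 ^ (11:ℕ)) * (m : ℝ) ^ (-(10 + ε' / 2) : ℝ)
        + Real.exp (-(c₁ / 2 * (m : ℝ) ^ β)) := by
    intro m hm
    set n : ℕ := m - 1 with hndef
    have hn : 1 ≤ n := by omega
    have hm1 : 1 ≤ m := by omega
    have hmn : (n : ℝ) = (m : ℝ) - 1 := by
      rw [hndef, Nat.cast_sub hm1, Nat.cast_one]
    have hm2 : (2:ℝ) ≤ (m : ℝ) := by exact_mod_cast hm
    have hm0 : (0:ℝ) < (m : ℝ) := by linarith
    have hge : (m : ℝ) / 2 ≤ (n : ℝ) := by rw [hmn]; linarith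
    have hhalf : (0:ℝ) < (m : ℝ) / 2 := by linarith
    have h1 : (P {ω | N ω = (m : ℕ∞)}).toReal ≤
        (P {ω | 0 < ∑ k ∈ Finset.Icc 1 (m - 1), ξ k ω}).toReal :=
      ENNReal.toReal_mono (measure_ne_top P _) (hN m hm)
    have h2 := key n hn
    have hterm1 : A * (n : ℝ) ^ (-(10 + ε' / 2) : ℝ) ≤
        (A * 2 ^ (11:ℕ)) * (m : ℝ) ^ (-(10 + ε' / 2) : ℝ) := by
      have ha : (n : ℝ) ^ (-(10 + ε' / 2) : ℝ) ≤ ((m : ℝ) / 2) ^ (-(10 + ε' / 2) : ℝ) :=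
        Real.rpow_le_rpow_of_nonpos hhalf hge (by linarith)
      have hb : ((m : ℝ) / 2) ^ (-(10 + ε' / 2) : ℝ)
          = (m : ℝ) ^ (-(10 + ε' / 2) : ℝ) * (2 : ℝ) ^ ((10 + ε' / 2) : ℝ) := by
        rw [Real.div_rpow hm0.le (by norm_num : (0:ℝ) ≤ 2), div_eq_mul_inv,
          ← Real.rpow_neg (by norm_num : (0:ℝ) ≤ 2), neg_neg]
      have hc : (2 : ℝ) ^ ((10 + ε' / 2) : ℝ) ≤ (2 : ℝ) ^ (11:ℕ) := by
        rw [← Real.rpow_natCast 2 11]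
        apply Real.rpow_le_rpow_of_exponent_le one_le_two
        push_cast; linarith
      calc A * (n : ℝ) ^ (-(10 + ε' / 2) : ℝ)
          ≤ A * ((m : ℝ) ^ (-(10 + ε' / 2) : ℝ) * (2 : ℝ) ^ ((10 + ε' / 2) : ℝ)) := by
            rw [← hb]; exact mul_le_mul_of_nonneg_left ha hA0
        _ ≤ A * ((m : ℝ) ^ (-(10 + ε' / 2) : ℝ) * (2 : ℝ) ^ (11:ℕ)) := by
            apply mul_le_mul_of_nonneg_left _ hA0
            apply mul_le_mul_of_nonneg_left hc (by positivity)
        _ = (A * 2 ^ (11:ℕ)) * (m : ℝ) ^ (-(10 + ε' / 2) : ℝ) := by ring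
    have hterm2 : Real.exp (-(c₁ * (n : ℝ) ^ β)) ≤ Real.exp (-(c₁ / 2 * (m : ℝ) ^ β)) := by
      apply Real.exp_le_exp.mpr
      apply neg_le_neg
      have ha : ((m : ℝ) / 2) ^ β ≤ (n : ℝ) ^ β :=
        Real.rpow_le_rpow hhalf.le hge hβ0.le
      have hb : (m : ℝ) ^ β / 2 ≤ ((m : ℝ) / 2) ^ β := by
        rw [Real.div_rpow hm0.le (by norm_num : (0:ℝ) ≤ 2)]
        apply div_le_div_of_nonneg_left (by positivity) (by positivity)
        calc (2:ℝ) ^ β ≤ (2:ℝ) ^ (1:ℝ) := Real.rpow_le_rpow_of_exponent_le one_le_two hβ1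
          _ = 2 := Real.rpow_one 2
      calc c₁ / 2 * (m : ℝ) ^ β = c₁ * ((m : ℝ) ^ β / 2) := by ring
        _ ≤ c₁ * ((m : ℝ) / 2) ^ β := mul_le_mul_of_nonneg_left hb hc₁.le
        _ ≤ c₁ * (n : ℝ) ^ β := mul_le_mul_of_nonneg_left ha hc₁.le
    calc (P {ω | N ω = (m : ℕ∞)}).toReal
        ≤ (P {ω | 0 < ∑ k ∈ Finset.Icc 1 (m - 1), ξ k ω}).toReal := h1
      _ ≤ A * (n : ℝ) ^ (-(10 + ε' / 2) : ℝ) + Real.exp (-(c₁ * (n : ℝ) ^ β)) := h2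
      _ ≤ (A * 2 ^ (11:ℕ)) * (m : ℝ) ^ (-(10 + ε' / 2) : ℝ)
            + Real.exp (-(c₁ / 2 * (m : ℝ) ^ β)) := add_le_add hterm1 hterm2
  -- summand comparison
  set C₂ : ℝ := A * 2 ^ (11:ℕ) with hC₂def
  have hC₂0 : 0 ≤ C₂ := by positivity
  have hsummand : ∀ m : ℕ, 2 ≤ m →
      (m : ℝ) ^ 4 * (P {ω | N ω = (m : ℕ∞)}).toReal ^ ((1:ℝ)/2) ≤
      C₂ ^ ((1:ℝ)/2) * (m : ℝ) ^ (-(1 + ε' / 4) : ℝ)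
        + (m : ℝ) ^ (4:ℕ) * Real.exp (-(c₁ / 4 * (m : ℝ) ^ β)) := by
    intro m hm
    have hm0 : (0:ℝ) < (m : ℝ) := by
      have : (2:ℝ) ≤ (m:ℝ) := by exact_mod_cast hm
      linarith
    have h0 : (0:ℝ) ≤ (P {ω | N ω = (m : ℕ∞)}).toReal := ENNReal.toReal_nonneg
    have h1 : (P {ω | N ω = (m : ℕ∞)}).toReal ^ ((1:ℝ)/2) ≤
        (C₂ * (m : ℝ) ^ (-(10 + ε' / 2) : ℝ) + Real.exp (-(c₁ / 2 * (m : ℝ) ^ β))) ^ ((1:ℝ)/2) :=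
      Real.rpow_le_rpow h0 (keym m hm) (by norm_num)
    have h2 : (C₂ * (m : ℝ) ^ (-(10 + ε' / 2) : ℝ) + Real.exp (-(c₁ / 2 * (m : ℝ) ^ β))) ^ ((1:ℝ)/2)
        ≤ (C₂ * (m : ℝ) ^ (-(10 + ε' / 2) : ℝ)) ^ ((1:ℝ)/2)
          + (Real.exp (-(c₁ / 2 * (m : ℝ) ^ β))) ^ ((1:ℝ)/2) :=
      rpow_half_add_le (by positivity) (Real.exp_pos _).le
    have h3 : (C₂ * (m : ℝ) ^ (-(10 + ε' / 2) : ℝ)) ^ ((1:ℝ)/2)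
        = C₂ ^ ((1:ℝ)/2) * (m : ℝ) ^ ((-(10 + ε' / 2)) * ((1:ℝ)/2)) := by
      rw [Real.mul_rpow hC₂0 (by positivity), ← Real.rpow_mul hm0.le]
    have h4 : (Real.exp (-(c₁ / 2 * (m : ℝ) ^ β))) ^ ((1:ℝ)/2)
        = Real.exp (-(c₁ / 4 * (m : ℝ) ^ β)) := by
      rw [← Real.exp_mul]
      congr 1
      ring
    have h5 : (m : ℝ) ^ (4:ℕ) * ((m : ℝ) ^ ((-(10 + ε' / 2)) * ((1:ℝ)/2)))
        = (m : ℝ) ^ (-(1 + ε' / 4) : ℝ) := by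
      rw [← Real.rpow_natCast (m:ℝ) 4, ← Real.rpow_add hm0]
      congr 1
      push_cast
      ring
    calc (m : ℝ) ^ 4 * (P {ω | N ω = (m : ℕ∞)}).toReal ^ ((1:ℝ)/2)
        ≤ (m : ℝ) ^ 4 * ((C₂ * (m : ℝ) ^ (-(10 + ε' / 2) : ℝ)) ^ ((1:ℝ)/2)
            + (Real.exp (-(c₁ / 2 * (m : ℝ) ^ β))) ^ ((1:ℝ)/2)) := by
          apply mul_le_mul_of_nonneg_left (h1.trans h2) (by positivity)
      _ = C₂ ^ ((1:ℝ)/2) * (m : ℝ) ^ (-(1 + ε' / 4) : ℝ)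
            + (m : ℝ) ^ (4:ℕ) * Real.exp (-(c₁ / 4 * (m : ℝ) ^ β)) := by
          rw [h3, h4, ← h5]
          ring
  -- conclude
  have hg : Summable (fun m : ℕ => C₂ ^ ((1:ℝ)/2) * (m : ℝ) ^ (-(1 + ε' / 4) : ℝ)
      + (m : ℝ) ^ (4:ℕ) * Real.exp (-(c₁ / 4 * (m : ℝ) ^ β))) := by
    apply Summable.add
    · apply Summable.mul_left
      apply Real.summable_nat_rpow.mpr
      linarith
    · exact summable_pow_mul_exp_neg_rpow (by positivity) hβ0
  rw [← summable_nat_add_iff 2]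
  apply Summable.of_nonneg_of_le
    (f := fun n : ℕ => C₂ ^ ((1:ℝ)/2) * ((n + 2 : ℕ) : ℝ) ^ (-(1 + ε' / 4) : ℝ)
      + ((n + 2 : ℕ) : ℝ) ^ (4:ℕ) * Real.exp (-(c₁ / 4 * ((n + 2 : ℕ) : ℝ) ^ β)))
  · intro n; positivity
  · intro n; exact hsummand (n + 2) (by omega)
  · exact (summable_nat_add_iff 2).mpr hg
end
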